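/- Normalization commutes with substitution: for every term t and substitution σ (such that all instantiations are well-formed terms), ⌈tσ⌉ = ⌈⌈t⌉σ⌉ = ⌈t⌈σ⌉⌉ = ⌈⌈t⌉⌈σ⌉⌉, where ⌈σ⌉ normalizes each value of σ. -/

import Mathlib

inductive BinOp : Type
  | enc | aenc | pair | sig
deriving DecidableEq

inductive Term : Type
  | atom : ℕ → Term
  | var  : ℕ → Term
  | bin  : BinOp → Term → Term → Term
  | priv : Term → Term
  | aci  : List Term → Term

def Term.subst (σ : ℕ → Term) : Term → Term
  | .atom a => .atom a
  | .var x => σ x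
  | .bin o p q => .bin o (p.subst σ) (q.subst σ)
  | .priv t => .priv (t.subst σ)
  | .aci L => .aci (L.attach.map fun p => p.1.subst σ)
decreasing_by
  all_goals simp_wf
  all_goals first
    | omega
    | (have := List.sizeOf_lt_of_mem p.2; omega)

def Term.elems : Term → Set Term
  | .aci L => ⋃ p ∈ L.attach, p.1.elems
  | t => {t}
decreasing_by
  have := List.sizeOf_lt_of_mem p.2; simp_wf; omega

def Term.subDag : Term → Set Term
  | .atom a => {.atom a}
  | .var x => {.var x}
  | .bin o p q => insert (.bin o p q) (p.subDag ∪ q.subDag)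
  | .priv t => insert (.priv t) t.subDag
  | .aci L => insert (.aci L) (⋃ p ∈ L.attach, p.1.subDag)
decreasing_by
  all_goals simp_wf
  all_goals first
    | omega
    | (have := List.sizeOf_lt_of_mem p.2; omega)

def Term.vars (t : Term) : Set ℕ := {x | Term.var x ∈ t.subDag}

def Term.Ground (t : Term) : Prop := t.vars = ∅

/-- Specification of the quasi-subterm function `sub`. -/
structure SubSpec where
  sub : Term → Set Term
  sub_atom : ∀ a, sub (.atom a) = {.atom a}
  sub_var : ∀ x, sub (.var x) = {.var x}
  sub_priv : ∀ t, sub (.priv t) = insert (.priv t) (sub t)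
  sub_bin : ∀ o p q, sub (.bin o p q) = insert (.bin o p q) (sub p ∪ sub q)
  sub_aci : ∀ L, sub (.aci L) = insert (.aci L) (⋃ p ∈ (Term.aci L).elems, sub p)

/-- Specification of the ACI normal form with respect to a strict total order `lt`. -/
structure NormSpec (lt : Term → Term → Prop) where
  nf : Term → Term
  nf_atom : ∀ a, nf (.atom a) = .atom a
  nf_var  : ∀ x, nf (.var x) = .var x
  nf_bin  : ∀ o p q, nf (.bin o p q) = .bin o (nf p) (nf q)
  nf_priv : ∀ t, nf (.priv t) = .priv (nf t)
  nf_aci_single : ∀ L t', nf '' (Term.aci L).elems = {t'} → nf (.aci L) = t'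
  nf_aci : ∀ L, (¬ ∃ t', nf '' (Term.aci L).elems = {t'}) →
      ∃ L' : List Term, List.Pairwise lt L' ∧
        (∀ s, s ∈ L' ↔ s ∈ nf '' (Term.aci L).elems) ∧ nf (.aci L) = .aci L'

/-- The derivable closure of a set `E` of terms under a deduction system `R`,
given as a set of rules (premises, conclusion): the least superset of `E`
closed under the rules. -/
inductive Der (R : Set (Set Term × Term)) (E : Set Term) : Term → Prop where
  | base {t : Term} : t ∈ E → Der R E t
  | step {l : Set Term} {r : Term} : (l, r) ∈ R → (∀ s ∈ l, Der R E s) → Der R E r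

/-- The composition rules of the DY+ACI deduction system (for normal form `nf`). -/
inductive DYComp (nf : Term → Term) : Set Term → Term → Prop where
  | enc  (t₁ t₂ : Term) : DYComp nf {t₁, t₂} (nf (.bin .enc t₁ t₂))
  | aenc (t₁ t₂ : Term) : DYComp nf {t₁, t₂} (nf (.bin .aenc t₁ t₂))
  | pair (t₁ t₂ : Term) : DYComp nf {t₁, t₂} (nf (.bin .pair t₁ t₂))
  | sig  (t₁ t₂ : Term) : DYComp nf {t₁, .priv t₂} (nf (.bin .sig t₁ (.priv t₂)))
  | aci  (L : List Term) (h : L ≠ []) : DYComp nf {t | t ∈ L} (nf (.aci L))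

/-- The composition rules of DY+ACI other than the ACI-set construction rule. -/
inductive DYCompNoACI (nf : Term → Term) : Set Term → Term → Prop where
  | enc  (t₁ t₂ : Term) : DYCompNoACI nf {t₁, t₂} (nf (.bin .enc t₁ t₂))
  | aenc (t₁ t₂ : Term) : DYCompNoACI nf {t₁, t₂} (nf (.bin .aenc t₁ t₂))
  | pair (t₁ t₂ : Term) : DYCompNoACI nf {t₁, t₂} (nf (.bin .pair t₁ t₂))
  | sig  (t₁ t₂ : Term) : DYCompNoACI nf {t₁, .priv t₂} (nf (.bin .sig t₁ (.priv t₂)))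

/-- The decomposition rules of the DY+ACI deduction system. -/
inductive DYDecomp (nf : Term → Term) : Set Term → Term → Prop where
  | enc  (t₁ t₂ : Term) : DYDecomp nf {.bin .enc t₁ t₂, nf t₂} (nf t₁)
  | aenc (t₁ t₂ : Term) : DYDecomp nf {.bin .aenc t₁ t₂, nf (.priv t₂)} (nf t₁)
  | fst  (t₁ t₂ : Term) : DYDecomp nf {.bin .pair t₁ t₂} (nf t₁)
  | snd  (t₁ t₂ : Term) : DYDecomp nf {.bin .pair t₁ t₂} (nf t₂)
  | aci  (L : List Term) (t : Term) (h : t ∈ L) : DYDecomp nf {.aci L} (nf t)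

/-- The DY+ACI deduction system as a set of rules. -/
def DYACI (nf : Term → Term) : Set (Set Term × Term) :=
  {p | DYComp nf p.1 p.2 ∨ DYDecomp nf p.1 p.2}

/-- A ground substitution `σ` is a model of a constraint system
`S = {Eᵢ ▷ tᵢ}` if `⌈tᵢσ⌉` is derivable from `⌈Eᵢσ⌉` in DY+ACI. -/
def Models (nf : Term → Term) (σ : ℕ → Term) (S : List (Set Term × Term)) : Prop :=
  ∀ c ∈ S, Der (DYACI nf) (nf '' ((fun t => t.subst σ) '' c.1)) (nf (c.2.subst σ))

/-- All terms occurring in a constraint system. -/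
def termsOf (S : List (Set Term × Term)) : Set Term :=
  ⋃ c ∈ S, c.1 ∪ {c.2}

/-- DAG-subterms of a constraint system. -/
def subDagS (S : List (Set Term × Term)) : Set Term :=
  ⋃ t ∈ termsOf S, t.subDag

/-- Variables of a constraint system. -/
def varsS (S : List (Set Term × Term)) : Set ℕ :=
  {x | Term.var x ∈ subDagS S}

/-- Applying a substitution to a constraint system. -/
def substS (θ : ℕ → Term) (S : List (Set Term × Term)) : List (Set Term × Term) :=
  S.map fun c => ((fun t => t.subst θ) '' c.1, c.2.subst θ)

/-- The domain of a substitution. -/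
def dom (θ : ℕ → Term) : Set ℕ := {x | θ x ≠ .var x}

/-!
Write `E t = ⌈·⌉ '' t.elems` for the normalized ACI-elements of `t`. Since a strictly sorted list
is determined by its members, `⌈t⌉` is determined by `E t`; conversely `(⌈t⌉).elems = E t` and
`⌈·⌉` is idempotent, so `⌈s⌉ = ⌈t⌉ ↔ E s = E t`. As `(tσ).elems` is the union of the
`(uσ).elems` over `u ∈ t.elems`, induction on `t` shows `⌈tσ⌉ = ⌈⌈t⌉σ'⌉` whenever
`⌈σ x⌉ = ⌈σ' x⌉` for all `x`; the three equations are instances of this.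
-/

namespace Term

@[simp] lemma elems_atom (a : ℕ) : (atom a).elems = {atom a} := elems.eq_2 _ nofun
@[simp] lemma elems_var (x : ℕ) : (var x).elems = {var x} := elems.eq_2 _ nofun
@[simp] lemma elems_bin (o : BinOp) (p q : Term) : (bin o p q).elems = {bin o p q} :=
  elems.eq_2 _ nofun
@[simp] lemma elems_priv (t : Term) : (priv t).elems = {priv t} := elems.eq_2 _ nofun

@[simp] lemma mem_elems_aci {L : List Term} {u : Term} :
    u ∈ (aci L).elems ↔ ∃ m ∈ L, u ∈ m.elems := by
  rw [elems]; simp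

@[simp] lemma subst_atom (σ : ℕ → Term) (a : ℕ) : (atom a).subst σ = atom a := by rw [subst]
@[simp] lemma subst_var (σ : ℕ → Term) (x : ℕ) : (var x).subst σ = σ x := by rw [subst]
@[simp] lemma subst_bin (σ : ℕ → Term) (o : BinOp) (p q : Term) :
    (bin o p q).subst σ = bin o (p.subst σ) (q.subst σ) := by rw [subst]
@[simp] lemma subst_priv (σ : ℕ → Term) (t : Term) : (priv t).subst σ = priv (t.subst σ) := by
  rw [subst]
@[simp] lemma subst_aci (σ : ℕ → Term) (L : List Term) :
    (aci L).subst σ = aci (L.map (subst σ)) := by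
  rw [subst]; simp

lemma sizeOf_le_of_mem_elems : ∀ {t u : Term}, u ∈ t.elems → sizeOf u ≤ sizeOf t
  | atom _, _, h | var _, _, h | bin _ _ _, _, h | priv _, _, h => by simp_all
  | aci L, u, h => by
    obtain ⟨m, hm, hu⟩ := mem_elems_aci.1 h
    have := List.sizeOf_lt_of_mem hm
    have := sizeOf_le_of_mem_elems hu
    simp only [aci.sizeOf_spec]
    omega
termination_by t => sizeOf t
decreasing_by simp_wf; have := List.sizeOf_lt_of_mem hm; omega

lemma sizeOf_lt_of_mem_elems_aci {L : List Term} {u : Term} (h : u ∈ (aci L).elems) :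
    sizeOf u < sizeOf (aci L) := by
  obtain ⟨m, hm, hu⟩ := mem_elems_aci.1 h
  have := List.sizeOf_lt_of_mem hm
  have := sizeOf_le_of_mem_elems hu
  simp only [aci.sizeOf_spec]
  omega

lemma elems_eq_singleton_of_mem_elems : ∀ {t u : Term}, u ∈ t.elems → u.elems = {u}
  | atom _, _, h | var _, _, h | bin _ _ _, _, h | priv _, _, h => by simp_all
  | aci L, u, h => by
    obtain ⟨m, hm, hu⟩ := mem_elems_aci.1 h
    exact elems_eq_singleton_of_mem_elems hu
termination_by t => sizeOf t
decreasing_by simp_wf; have := List.sizeOf_lt_of_mem hm; omega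

lemma elems_subst (σ : ℕ → Term) : ∀ t : Term,
    (t.subst σ).elems = ⋃ u ∈ t.elems, (u.subst σ).elems
  | atom _ | var _ | bin _ _ _ | priv _ => by simp
  | aci L => by
    ext v
    simp only [subst_aci, mem_elems_aci, List.mem_map, Set.mem_iUnion, exists_prop]
    constructor
    · rintro ⟨_, ⟨m, hm, rfl⟩, hv⟩
      rw [elems_subst σ m] at hv
      obtain ⟨u, hu, hv⟩ := Set.mem_iUnion₂.1 hv
      exact ⟨u, ⟨m, hm, hu⟩, hv⟩
    · rintro ⟨u, ⟨m, hm, hu⟩, hv⟩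
      exact ⟨m.subst σ, ⟨m, hm, rfl⟩, elems_subst σ m ▸ Set.mem_biUnion hu hv⟩
termination_by t => sizeOf t
decreasing_by all_goals simp_wf; have := List.sizeOf_lt_of_mem hm; omega

@[elab_as_elim]
lemma elems_induction {P : Term → Prop} (atom : ∀ a, P (atom a)) (var : ∀ x, P (var x))
    (bin : ∀ o p q, P p → P q → P (bin o p q)) (priv : ∀ t, P t → P (priv t))
    (aci : ∀ L, (∀ u ∈ (aci L).elems, P u) → P (aci L)) : ∀ t, P t
  | .atom a => atom a
  | .var x => var x
  | .bin o p q =>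
    bin o p q (elems_induction atom var bin priv aci p) (elems_induction atom var bin priv aci q)
  | .priv t => priv t (elems_induction atom var bin priv aci t)
  | .aci L => aci L fun u _ => elems_induction atom var bin priv aci u
termination_by t => sizeOf t
decreasing_by
  all_goals simp_wf
  all_goals first | omega | simpa using sizeOf_lt_of_mem_elems_aci ‹_›

end Term

namespace NormSpec

open Term

variable {lt : Term → Term → Prop} (N : NormSpec lt)

lemma elems_nf_of_elems_eq_singleton {u : Term} (hu : u.elems = {u}) :
    (N.nf u).elems = {N.nf u} := by
  cases u with
  | atom a => simp [N.nf_atom]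
  | var x => simp [N.nf_var]
  | bin o p q => simp [N.nf_bin]
  | priv t => simp [N.nf_priv]
  | aci L =>
    have := sizeOf_lt_of_mem_elems_aci (hu ▸ Set.mem_singleton (aci L))
    omega

lemma elems_nf (t : Term) : (N.nf t).elems = N.nf '' t.elems := by
  have hnf : ∀ u ∈ t.elems, (N.nf u).elems = {N.nf u} := fun u hu =>
    N.elems_nf_of_elems_eq_singleton (elems_eq_singleton_of_mem_elems hu)
  cases t with
  | aci L =>
    by_cases hsing : ∃ t', N.nf '' (aci L).elems = {t'}
    · obtain ⟨t', hS⟩ := hsing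
      obtain ⟨u, hu, rfl⟩ : t' ∈ N.nf '' (aci L).elems := hS ▸ rfl
      rw [N.nf_aci_single L _ hS, hnf u hu, hS]
    · obtain ⟨L', -, hL', hnfL⟩ := N.nf_aci L hsing
      ext v
      rw [hnfL, mem_elems_aci, ← hL']
      constructor
      · rintro ⟨w, hw, hv⟩
        obtain ⟨u, hu, rfl⟩ := (hL' w).1 hw
        rw [hnf u hu, Set.mem_singleton_iff] at hv
        rwa [hv]
      · intro hv
        obtain ⟨u, hu, rfl⟩ := (hL' v).1 hv
        exact ⟨N.nf u, hv, hnf u hu ▸ Set.mem_singleton _⟩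
  | _ => simp [hnf]

lemma nf_eq_of_image_elems_eq_singleton {t t' : Term} (h : N.nf '' t.elems = {t'}) :
    N.nf t = t' := by
  cases t with
  | aci L => exact N.nf_aci_single L t' h
  | _ => simpa using h

lemma exists_pairwise_of_image_elems_ne_singleton {t : Term}
    (h : ¬ ∃ t', N.nf '' t.elems = {t'}) :
    ∃ L' : List Term, L'.Pairwise lt ∧ (∀ s, s ∈ L' ↔ s ∈ N.nf '' t.elems) ∧
      N.nf t = aci L' := by
  cases t with
  | aci L => exact N.nf_aci L h
  | _ => simp at h

variable [IsStrictOrder Term lt]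

lemma nf_eq_of_image_elems_eq {s t : Term} (h : N.nf '' s.elems = N.nf '' t.elems) :
    N.nf s = N.nf t := by
  by_cases hsing : ∃ t', N.nf '' s.elems = {t'}
  · obtain ⟨t', hs⟩ := hsing
    rw [N.nf_eq_of_image_elems_eq_singleton hs, N.nf_eq_of_image_elems_eq_singleton (h ▸ hs)]
  · obtain ⟨L₁, hsorted₁, hL₁, hs⟩ := N.exists_pairwise_of_image_elems_ne_singleton hsing
    obtain ⟨L₂, hsorted₂, hL₂, ht⟩ := N.exists_pairwise_of_image_elems_ne_singleton (h ▸ hsing)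
    rw [hs, ht, hsorted₁.eq_of_mem_iff hsorted₂ fun a => by rw [hL₁, hL₂, h]]

lemma nf_nf (t : Term) : N.nf (N.nf t) = N.nf t := by
  induction t using elems_induction with
  | atom a => simp only [N.nf_atom]
  | var x => simp only [N.nf_var]
  | bin o p q hp hq => rw [N.nf_bin, N.nf_bin, hp, hq]
  | priv t ht => rw [N.nf_priv, N.nf_priv, ht]
  | aci L ih =>
    refine N.nf_eq_of_image_elems_eq ?_
    rw [N.elems_nf, Set.image_image]
    exact Set.image_congr ih

lemma image_nf_elems_nf (t : Term) : N.nf '' (N.nf t).elems = N.nf '' t.elems := by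
  rw [N.elems_nf, Set.image_image]
  exact Set.image_congr fun u _ => N.nf_nf u

lemma nf_eq_nf_iff {s t : Term} : N.nf s = N.nf t ↔ N.nf '' s.elems = N.nf '' t.elems :=
  ⟨fun h => by rw [← N.image_nf_elems_nf s, h, N.image_nf_elems_nf], N.nf_eq_of_image_elems_eq⟩

lemma nf_subst_eq_nf_nf_subst {σ σ' : ℕ → Term} (hσ : ∀ x, N.nf (σ x) = N.nf (σ' x))
    (t : Term) : N.nf (t.subst σ) = N.nf ((N.nf t).subst σ') := by
  induction t using elems_induction with
  | atom a => simp only [subst_atom, N.nf_atom]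
  | var x => simp only [subst_var, N.nf_var, hσ]
  | bin o p q hp hq => simp only [subst_bin, N.nf_bin, hp, hq]
  | priv t ht => simp only [subst_priv, N.nf_priv, ht]
  | aci L ih =>
    rw [N.nf_eq_nf_iff, elems_subst, elems_subst, N.elems_nf, Set.biUnion_image,
      Set.image_iUnion₂, Set.image_iUnion₂]
    exact Set.iUnion₂_congr fun u hu => N.nf_eq_nf_iff.1 (ih u hu)

end NormSpec

/-- Normalization commutes with substitution. -/
theorem norm_subst_comm (lt : Term → Term → Prop) (hlt : IsStrictTotalOrder Term lt)
    (N : NormSpec lt) : ∀ (t : Term) (σ : ℕ → Term),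
      N.nf (t.subst σ) = N.nf ((N.nf t).subst σ) ∧
      N.nf (t.subst σ) = N.nf (t.subst (fun x => N.nf (σ x))) ∧
      N.nf (t.subst σ) = N.nf ((N.nf t).subst (fun x => N.nf (σ x))) := by
  intro t σ
  have hσ : ∀ x, N.nf (σ x) = N.nf (N.nf (σ x)) := fun x => (N.nf_nf (σ x)).symm
  have h₃ := N.nf_subst_eq_nf_nf_subst hσ t
  exact ⟨N.nf_subst_eq_nf_nf_subst (fun _ => rfl) t,
    h₃.trans (N.nf_subst_eq_nf_nf_subst (fun _ => rfl) t).symm, h₃⟩
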